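/- arXiv:0706.3441 — 2 statements merged into one kernel-verified Lean document; each statement's English description precedes it below -/
import Mathlib

section
/- Let K be an H-graded field, G a finite group of graded automorphisms of K, L = K^G, R ⊆ R' graded valuation rings of L, and A' a graded valuation ring of K extending R'. Then there exists a graded valuation ring A of K extending R with A ⊆ A'. -/
open scoped DirectSum

/-- An `H`-graded field: a nonzero commutative ring with an internal grading by the
commutative group `H` in which every nonzero homogeneous element is invertible
(with homogeneous inverse). -/
structure GradedField (H : Type*) [CommGroup H] [DecidableEq H] (K : Type*) [CommRing K] where
  comp : H → AddSubgroup K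
  one_mem : (1 : K) ∈ comp 1
  mul_mem : ∀ {g h : H} {x y : K}, x ∈ comp g → y ∈ comp h → x * y ∈ comp (g * h)
  isInternal : DirectSum.IsInternal fun h : H => comp h
  zero_ne_one : (0 : K) ≠ 1
  inv_mem : ∀ {h : H} {x : K}, x ∈ comp h → x ≠ 0 → ∃ y ∈ comp h⁻¹, x * y = 1

namespace GradedField

variable {H : Type*} [CommGroup H] [DecidableEq H] {K : Type*} [CommRing K] (F : GradedField H K)

/-- A homogeneous element. -/
def Homogeneous (x : K) : Prop := ∃ h, x ∈ F.comp h

/-- A subring is graded if each of its elements is a sum of homogeneous elements of the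
subring. -/
def IsGradedSubring (R : Subring K) : Prop :=
  ∀ x ∈ R, x ∈ AddSubgroup.closure {y : K | y ∈ R ∧ F.Homogeneous y}

/-- A graded subfield: a graded subring closed under inverses of nonzero homogeneous
elements. -/
structure IsGradedSubfield (L : Subring K) : Prop where
  graded : F.IsGradedSubring L
  inv_mem : ∀ x ∈ L, F.Homogeneous x → x ≠ 0 → Ring.inverse x ∈ L

/-- A graded valuation ring of the graded subfield `L`: a graded subring `R ⊆ L` such that
every nonzero homogeneous element of `L` lies in `R` or has its inverse in `R`. -/
def IsGradedValRing (L R : Subring K) : Prop :=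
  R ≤ L ∧ F.IsGradedSubring R ∧
    ∀ x ∈ L, F.Homogeneous x → x ≠ 0 → (x ∈ R ∨ Ring.inverse x ∈ R)

/-- The identity component `K₁`, as a subring. -/
def oneComponent : Subring K where
  carrier := F.comp 1
  one_mem' := F.one_mem
  mul_mem' := fun ha hb => by simpa using F.mul_mem ha hb
  add_mem' := fun ha hb => (F.comp 1).add_mem ha hb
  zero_mem' := (F.comp 1).zero_mem
  neg_mem' := fun ha => (F.comp 1).neg_mem ha

theorem mem_oneComponent {x : K} : x ∈ F.oneComponent ↔ x ∈ F.comp 1 := Iff.rfl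

/-- The value group `ρ(L^×) ⊆ H` of a graded subfield `L`. -/
def valueGroup (L : Subring K)
    (hL : ∀ x ∈ L, F.Homogeneous x → x ≠ 0 → Ring.inverse x ∈ L) : Subgroup H where
  carrier := {h | ∃ x ∈ F.comp h, x ≠ 0 ∧ x ∈ L}
  one_mem' := ⟨1, F.one_mem, Ne.symm F.zero_ne_one, L.one_mem⟩
  mul_mem' := by
    rintro g h ⟨x, hx, hx0, hxL⟩ ⟨y, hy, hy0, hyL⟩
    obtain ⟨x', hx', hxx'⟩ := F.inv_mem hx hx0
    obtain ⟨y', hy', hyy'⟩ := F.inv_mem hy hy0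
    refine ⟨x * y, F.mul_mem hx hy, ?_, L.mul_mem hxL hyL⟩
    intro h0
    have h1 : x * y * (x' * y') = 1 := by rw [mul_mul_mul_comm, hxx', hyy', one_mul]
    rw [h0, zero_mul] at h1
    exact F.zero_ne_one h1
  inv_mem' := by
    rintro g ⟨x, hx, hx0, hxL⟩
    obtain ⟨y, hy, hxy⟩ := F.inv_mem hx hx0
    have hu : IsUnit x := IsUnit.of_mul_eq_one y hxy
    have hyx : Ring.inverse x = y := by
      calc Ring.inverse x = Ring.inverse x * (x * y) := by rw [hxy, mul_one]
        _ = Ring.inverse x * x * y := by ring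
        _ = y := by rw [Ring.inverse_mul_cancel x hu, one_mul]
    refine ⟨y, hy, ?_, ?_⟩
    · intro h0; rw [h0, mul_zero] at hxy; exact F.zero_ne_one hxy
    · rw [← hyx]; exact hL x hxL ⟨g, hx⟩ hx0

/-- The value group `ρ(K^×)` of the whole graded field. -/
def fullValueGroup : Subgroup H :=
  F.valueGroup ⊤ (fun _ _ _ _ => Subring.mem_top _)

/-- `K₁` as a module over `L₁ = K₁ ∩ L`. -/
def oneSubmodule (L : Subring K) : Submodule ↥(F.oneComponent ⊓ L) K where
  carrier := F.comp 1
  add_mem' := fun ha hb => (F.comp 1).add_mem ha hb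
  zero_mem' := (F.comp 1).zero_mem
  smul_mem' := fun c x hx => by
    have hc : (c : K) ∈ F.comp 1 := ((Subring.mem_inf).mp c.2).1
    have := F.mul_mem hc hx
    simpa [Subring.smul_def] using this

/-- A graded automorphism: a ring automorphism preserving each graded component. -/
def IsGradedAut (σ : RingAut K) : Prop := ∀ (h : H) (x : K), x ∈ F.comp h → σ x ∈ F.comp h

end GradedField

/-- The fixed subring `K^G` of a group of ring automorphisms. -/
def fixedSubring {K : Type*} [CommRing K] (G : Subgroup (RingAut K)) : Subring K where
  carrier := {x | ∀ σ ∈ G, σ x = x}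
  one_mem' := fun σ _ => map_one σ
  mul_mem' := fun ha hb σ hσ => by rw [map_mul, ha σ hσ, hb σ hσ]
  add_mem' := fun ha hb σ hσ => by rw [map_add, ha σ hσ, hb σ hσ]
  zero_mem' := fun σ _ => map_zero σ
  neg_mem' := fun ha σ hσ => by rw [map_neg, ha σ hσ]

theorem mem_fixedSubring {K : Type*} [CommRing K] {G : Subgroup (RingAut K)} {x : K} :
    x ∈ fixedSubring G ↔ ∀ σ ∈ G, σ x = x := Iff.rfl


namespace GradedField

variable {H : Type*} [CommGroup H] [DecidableEq H] {K : Type*} [CommRing K]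
variable (F : GradedField H K)

/-- Decomposition of an element into its homogeneous components. -/
noncomputable def decompose (x : K) : ⨁ h : H, ↥(F.comp h) :=
  (Equiv.ofBijective _ F.isInternal).symm x

/-- The degree-`h` homogeneous component of `x`. -/
noncomputable def component (h : H) (x : K) : K := (F.decompose x h : K)

/-- The inertia subgroup of `G`: graded automorphisms in `G` acting trivially on `K₁`. -/
def inertia (G : Subgroup (RingAut K)) : Subgroup (RingAut K) where
  carrier := {σ | σ ∈ G ∧ ∀ x ∈ F.comp 1, σ x = x}
  one_mem' := ⟨G.one_mem, fun _ _ => rfl⟩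
  mul_mem' := fun {a b} ha hb => ⟨G.mul_mem ha.1 hb.1, fun x hx => by
    show a (b x) = x
    rw [hb.2 x hx, ha.2 x hx]⟩
  inv_mem' := fun {a} ha => ⟨G.inv_mem ha.1, fun x hx => by
    conv_lhs => rw [← ha.2 x hx]
    exact a.symm_apply_apply x⟩

theorem mem_inertia {G : Subgroup (RingAut K)} {σ : RingAut K} :
    σ ∈ F.inertia G ↔ σ ∈ G ∧ ∀ x ∈ F.comp 1, σ x = x := Iff.rfl

end GradedField

/-- A subring `S` containing a subring `L`, viewed as an `L`-submodule of the ambient ring. -/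
def Subring.toSubmoduleOver {K : Type*} [CommRing K] (L S : Subring K) (hLS : L ≤ S) :
    Submodule ↥L K where
  carrier := S
  add_mem' := fun ha hb => S.add_mem ha hb
  zero_mem' := S.zero_mem
  smul_mem' := fun c x hx => S.mul_mem (hLS c.2) hx

section ZR

variable {H : Type*} [CommGroup H] [DecidableEq H] {K : Type*} [CommRing K]

/-- The Zariski–Riemann space of graded valuation rings of `K` containing `k₀`. -/
def GradedField.ZR (F : GradedField H K) (k₀ : Subring K) : Type _ :=
  {O : Subring K // F.IsGradedValRing ⊤ O ∧ k₀ ≤ O}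

/-- The set of homogeneous units (nonzero homogeneous elements) of `K`. -/
def GradedField.HomogUnits (F : GradedField H K) : Type _ :=
  {x : K // x ≠ 0 ∧ F.Homogeneous x}

open Classical in
/-- The embedding of the Zariski–Riemann space into `{0,1}^{K^×}` via characteristic
functions. -/
noncomputable def GradedField.chi (F : GradedField H K) (k₀ : Subring K) (O : F.ZR k₀) :
    F.HomogUnits → Bool :=
  fun x => decide (x.1 ∈ O.1)

/-- Basic open sets `P{F}∖{G}` of the constructible topology, for finite sets `F`, `G` of
homogeneous units. -/
def GradedField.constructibleBasis (F : GradedField H K) (k₀ : Subring K) :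
    Set (Set (F.ZR k₀)) :=
  {s | ∃ Fs Gs : Finset K, (∀ a ∈ Fs, a ≠ 0 ∧ F.Homogeneous a) ∧
    (∀ b ∈ Gs, b ≠ 0 ∧ F.Homogeneous b) ∧
    s = {O : F.ZR k₀ | (∀ a ∈ Fs, a ∈ O.1) ∧ ∀ b ∈ Gs, b ∉ O.1}}

/-- The constructible topology on the Zariski–Riemann space. -/
def GradedField.constructibleTop (F : GradedField H K) (k₀ : Subring K) :
    TopologicalSpace (F.ZR k₀) :=
  TopologicalSpace.generateFrom (F.constructibleBasis k₀)

/-!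
Since `G` acts by graded automorphisms, `L = K^G` is a graded subfield of `K`, and `R ⊆ R' ⊆ A'`;
so it suffices to extend a graded valuation ring `R` of a graded subfield `L` to a graded
valuation ring of `K` inside a given graded valuation ring `A' ⊇ R`. This is Chevalley's argument,
run directly in the graded setting.

Let `M` be the set of homogeneous nonunits of `R` or of `A'`. Zorn's lemma gives a maximal graded
subring `B` with `R ⊆ B ⊆ A'` and `M ⊆ B` such that `1` is not in the ideal `B M`. It is a
graded valuation ring of `K`: if a homogeneous `x` and its inverse both lie outside `B`, then by
maximality `1` lies in `B[x] M` and in `B[x⁻¹] M`, and the usual degree-lowering argument puts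
`1` in `B M`. It meets `L` in `R`, because a homogeneous `z ∈ B ∩ L` outside `R` has `z⁻¹ ∈ M`.
The search starts at `R[M]`, for which `1 ∉ R[M] M` is seen on degree-one components.
-/

lemma Ring.inverse_eq_of_mul_eq_one {M : Type*} [CommMonoidWithZero M] {x y : M} (h : x * y = 1) :
    Ring.inverse x = y := by
  simpa using (Ring.inverse_mul_eq_iff_eq_mul x 1 y (.of_mul_eq_one y h)).mpr h.symm

namespace Subring

open Polynomial
open scoped Pointwise

variable {K : Type*} [CommRing K] {S S' B : Subring K} {s T : Set K} {w x y : K}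

def nonunits (S : Subring K) : Set K := {x | x ∈ S ∧ ∀ y ∈ S, x * y ≠ 1}

lemma mul_mem_nonunits {a : K} (ha : a ∈ S) (hx : x ∈ S.nonunits) : a * x ∈ S.nonunits :=
  ⟨S.mul_mem ha hx.1, fun y hy h => hx.2 (a * y) (S.mul_mem ha hy) (by rw [← h]; ring)⟩

lemma zero_mem_nonunits (h : (0 : K) ≠ 1) : 0 ∈ S.nonunits :=
  ⟨S.zero_mem, fun y _ h' => h (by rwa [zero_mul] at h')⟩

lemma one_notMem_nonunits : 1 ∉ S.nonunits := fun h => h.2 1 S.one_mem (mul_one 1)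

lemma mem_nonunits_of_le (hSS' : S ≤ S') (hx : x ∈ S'.nonunits) (hxS : x ∈ S) : x ∈ S.nonunits :=
  ⟨hxS, fun y hy => hx.2 y (hSS' hy)⟩

lemma mem_nonunits_of_mul_eq_one (hxy : x * y = 1) (hx : x ∉ S) (hy : y ∈ S) : y ∈ S.nonunits :=
  ⟨hy, fun z hz h => hx (by rwa [show x = z by linear_combination z * hxy - x * h])⟩

lemma add_mem_nonunits_of_mul_mem {y' : K} (hx : x ∈ S.nonunits) (hy : y ∈ S.nonunits)
    (hyy' : y * y' = 1) (hxy' : x * y' ∈ S) : x + y ∈ S.nonunits :=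
  ⟨S.add_mem hx.1 hy.1, fun z hz h => hy.2 ((x * y' + 1) * z)
    (S.mul_mem (S.add_mem hxy' S.one_mem) hz) (by linear_combination h + x * z * hyy')⟩

def idealSpan (B : Subring K) (s : Set K) : AddSubgroup K :=
  AddSubgroup.closure ((B : Set K) * s)

lemma mul_mem_idealSpan {b m : K} (hb : b ∈ B) (hm : m ∈ s) : b * m ∈ B.idealSpan s :=
  AddSubgroup.subset_closure (Set.mul_mem_mul hb hm)

lemma idealSpan_mono {B' : Subring K} (h : B ≤ B') : B.idealSpan s ≤ B'.idealSpan s :=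
  AddSubgroup.closure_mono (Set.mul_subset_mul_right h)

lemma idealSpan_le (hs : s ⊆ B) : B.idealSpan s ≤ B.toAddSubgroup :=
  AddSubgroup.closure_le _ |>.mpr <| by
    rintro _ ⟨b, hb, m, hm, rfl⟩
    exact B.mul_mem hb (hs hm)

lemma mul_mem_idealSpan_left {b : K} (hb : b ∈ B) (hx : x ∈ B.idealSpan s) :
    b * x ∈ B.idealSpan s := by
  induction hx using AddSubgroup.closure_induction with
  | mem x hx =>
    obtain ⟨b', hb', m, hm, rfl⟩ := hx
    rw [← mul_assoc]
    exact mul_mem_idealSpan (B.mul_mem hb hb') hm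
  | zero => rw [mul_zero]; exact zero_mem _
  | add x y _ _ hx hy => rw [mul_add]; exact add_mem hx hy
  | neg x _ hx => rw [mul_neg]; exact neg_mem hx

lemma mul_mem_idealSpan_of_subset (hs : s ⊆ B) (hx : x ∈ B.idealSpan s)
    (hy : y ∈ B.idealSpan s) : x * y ∈ B.idealSpan s :=
  mul_mem_idealSpan_left (idealSpan_le hs hx) hy

lemma exists_mem_idealSpan_of_mem_sSup {c : Set (Subring K)} (hne : c.Nonempty)
    (hdir : DirectedOn (· ≤ ·) c) (hx : x ∈ (sSup c).idealSpan s) :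
    ∃ B ∈ c, x ∈ B.idealSpan s := by
  induction hx using AddSubgroup.closure_induction with
  | mem x hx =>
    obtain ⟨b, hb, m, hm, rfl⟩ := hx
    obtain ⟨B, hBc, hbB⟩ := (mem_sSup_of_directedOn hne hdir).mp hb
    exact ⟨B, hBc, mul_mem_idealSpan hbB hm⟩
  | zero =>
    obtain ⟨B, hBc⟩ := hne
    exact ⟨B, hBc, zero_mem _⟩
  | add x y _ _ hx hy =>
    obtain ⟨B₁, hB₁, hx⟩ := hx
    obtain ⟨B₂, hB₂, hy⟩ := hy
    obtain ⟨B, hB, h₁, h₂⟩ := hdir B₁ hB₁ B₂ hB₂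
    exact ⟨B, hB, add_mem (idealSpan_mono h₁ hx) (idealSpan_mono h₂ hy)⟩
  | neg x _ hx =>
    obtain ⟨B, hB, hx⟩ := hx
    exact ⟨B, hB, neg_mem hx⟩

lemma exists_polynomial_of_mem_closure_insert (hT : T ⊆ B) (hx : x ∈ closure (insert w T)) :
    ∃ p : K[X], (∀ i, p.coeff i ∈ B) ∧ p.eval w = x := by
  let P : Subring K := (mapRingHom B.subtype).range.map (evalRingHom w)
  have hP : closure (insert w T) ≤ P := closure_le.mpr <| Set.insert_subset
    ⟨_, ⟨X, map_X _⟩, eval_X⟩ fun t ht => ⟨_, ⟨C ⟨t, hT ht⟩, map_C _⟩, eval_C⟩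
  obtain ⟨_, ⟨p, rfl⟩, rfl⟩ := hP hx
  exact ⟨_, fun i => by simp [coeff_map], rfl⟩

lemma exists_polynomial_of_mem_idealSpan_closure_insert (hT : T ⊆ B)
    (hx : x ∈ (closure (insert w T)).idealSpan s) :
    ∃ p : K[X], (∀ i, p.coeff i ∈ B.idealSpan s) ∧ p.eval w = x := by
  induction hx using AddSubgroup.closure_induction with
  | mem x hx =>
    obtain ⟨y, hy, m, hm, rfl⟩ := hx
    obtain ⟨p, hpB, rfl⟩ := exists_polynomial_of_mem_closure_insert hT hy
    exact ⟨p * C m, fun i => by rw [coeff_mul_C]; exact mul_mem_idealSpan (hpB i) hm,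
      by rw [eval_mul, eval_C]⟩
  | zero => exact ⟨0, fun i => by simp, eval_zero⟩
  | add x y _ _ hx hy =>
    obtain ⟨p, hp, rfl⟩ := hx
    obtain ⟨q, hq, rfl⟩ := hy
    exact ⟨p + q, fun i => by rw [coeff_add]; exact add_mem (hp i) (hq i), eval_add⟩
  | neg x _ hx =>
    obtain ⟨p, hp, rfl⟩ := hx
    exact ⟨-p, fun i => by rw [coeff_neg]; exact neg_mem (hp i), eval_neg _ _⟩

end Subring

namespace AddSubgroup

variable {K : Type*} [CommRing K] {I : AddSubgroup K} {u v x : K} {n m : ℕ}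

def powSpan (I : AddSubgroup K) (u : K) (n : ℕ) : AddSubgroup K :=
  closure {x | ∃ c ∈ I, ∃ k ≤ n, c * u ^ k = x}

lemma mul_pow_mem_powSpan {c : K} {k : ℕ} (hc : c ∈ I) (hk : k ≤ n) : c * u ^ k ∈ I.powSpan u n :=
  subset_closure ⟨c, hc, k, hk, rfl⟩

lemma powSpan_zero_le : I.powSpan u 0 ≤ I :=
  (closure_le I).mpr fun _ ⟨c, hc, k, hk, hx⟩ => by
    rw [← hx, Nat.le_zero.mp hk, pow_zero, mul_one]
    exact hc

lemma eval_mem_powSpan {p : Polynomial K} (hp : ∀ i, p.coeff i ∈ I) :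
    p.eval u ∈ I.powSpan u p.natDegree := by
  rw [Polynomial.eval_eq_sum_range]
  exact sum_mem fun i hi => mul_pow_mem_powSpan (hp i) (Nat.lt_succ_iff.mp (Finset.mem_range.mp hi))

lemma mul_mem_powSpan (hI : ∀ x ∈ I, ∀ y ∈ I, x * y ∈ I) {a : K} (ha : a ∈ I)
    (hx : x ∈ I.powSpan u n) : a * x ∈ I.powSpan u n := by
  induction hx using closure_induction with
  | mem x hx =>
    obtain ⟨c, hc, k, hk, rfl⟩ := hx
    rw [← mul_assoc]
    exact mul_pow_mem_powSpan (hI a ha c hc) hk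
  | zero => rw [mul_zero]; exact zero_mem _
  | add x y _ _ hx hy => rw [mul_add]; exact add_mem hx hy
  | neg x _ hx => rw [mul_neg]; exact neg_mem hx

lemma exists_sub_mem_powSpan (hx : x ∈ I.powSpan u (n + 1)) :
    ∃ c ∈ I, x - c * u ^ (n + 1) ∈ I.powSpan u n := by
  induction hx using closure_induction with
  | mem x hx =>
    obtain ⟨c, hc, k, hk, rfl⟩ := hx
    rcases hk.lt_or_eq with hk | rfl
    · exact ⟨0, zero_mem _, by simpa using mul_pow_mem_powSpan hc (Nat.lt_succ_iff.mp hk)⟩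
    · exact ⟨c, hc, by simp⟩
  | zero => exact ⟨0, zero_mem _, by simp⟩
  | add x y _ _ hx hy =>
    obtain ⟨c, hc, hx⟩ := hx
    obtain ⟨d, hd, hy⟩ := hy
    exact ⟨c + d, add_mem hc hd, by convert add_mem hx hy using 1; ring⟩
  | neg x _ hx =>
    obtain ⟨c, hc, hx⟩ := hx
    exact ⟨-c, neg_mem hc, by convert neg_mem hx using 1; ring⟩

-- For `y = ∑ eₖ vᵏ` (`k ≤ m`), `uv = 1` turns `(y - e₀) uⁿ⁺¹` into a combination of lower powers.
lemma exists_mul_sub_mul_pow_mem_powSpan (hI : ∀ x ∈ I, ∀ y ∈ I, x * y ∈ I) (huv : u * v = 1)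
    (hmn : m ≤ n + 1) {y : K} (hy : y ∈ I.powSpan v m) :
    ∃ e ∈ I, ∀ c ∈ I, c * (y - e) * u ^ (n + 1) ∈ I.powSpan u n := by
  induction hy using closure_induction with
  | mem y hy =>
    obtain ⟨e, he, k, hk, rfl⟩ := hy
    rcases k with _ | j
    · exact ⟨e, he, fun c _ => by simp⟩
    refine ⟨0, zero_mem _, fun c hc => ?_⟩
    have hpow : u ^ (n + 1) = u ^ (n - j) * u ^ (j + 1) := by rw [← pow_add]; congr 1; omega
    have huv' : u ^ (j + 1) * v ^ (j + 1) = 1 := by rw [← mul_pow, huv, one_pow]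
    have : c * (e * v ^ (j + 1) - 0) * u ^ (n + 1) = c * e * u ^ (n - j) := by
      rw [hpow]
      linear_combination c * e * u ^ (n - j) * huv'
    rw [this]
    exact mul_pow_mem_powSpan (hI c hc e he) (Nat.sub_le n j)
  | zero => exact ⟨0, zero_mem _, fun c _ => by simp⟩
  | add x y _ _ hx hy =>
    obtain ⟨e, he, hx⟩ := hx
    obtain ⟨f, hf, hy⟩ := hy
    exact ⟨e + f, add_mem he hf, fun c hc => by convert add_mem (hx c hc) (hy c hc) using 1; ring⟩
  | neg x _ hx =>
    obtain ⟨e, he, hx⟩ := hx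
    exact ⟨-e, neg_mem he, fun c hc => by convert neg_mem (hx c hc) using 1; ring⟩

-- With `1 = c uⁿ⁺¹ + t` and `1 = e + ∑_{k ≥ 1} eₖ vᵏ`, the identity
-- `1 = e + (1 - e) t + c (1 - e) uⁿ⁺¹` writes `1` with powers of `u` up to `n` only.
lemma one_mem_powSpan_of_succ (hI : ∀ x ∈ I, ∀ y ∈ I, x * y ∈ I) (huv : u * v = 1)
    (hmn : m ≤ n + 1) (hu : 1 ∈ I.powSpan u (n + 1)) (hv : 1 ∈ I.powSpan v m) :
    1 ∈ I.powSpan u n := by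
  obtain ⟨c, hc, hcu⟩ := exists_sub_mem_powSpan hu
  obtain ⟨e, he, hev⟩ := exists_mul_sub_mul_pow_mem_powSpan hI huv hmn hv
  have : (1 : K) = e + ((1 - c * u ^ (n + 1)) - e * (1 - c * u ^ (n + 1))) +
      c * (1 - e) * u ^ (n + 1) := by ring
  rw [this]
  refine add_mem (add_mem ?_ (sub_mem hcu (mul_mem_powSpan hI he hcu))) (hev c hc)
  simpa using mul_pow_mem_powSpan (u := u) he (Nat.zero_le n)

lemma one_mem_of_one_mem_powSpan (hI : ∀ x ∈ I, ∀ y ∈ I, x * y ∈ I) (huv : u * v = 1)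
    (hu : 1 ∈ I.powSpan u n) (hv : 1 ∈ I.powSpan v m) : (1 : K) ∈ I := by
  induction h : n + m using Nat.strong_induction_on generalizing n m u v with
  | _ N ih =>
    rcases n with _ | n
    · exact powSpan_zero_le hu
    rcases m with _ | m
    · exact powSpan_zero_le hv
    rcases le_total m n with hmn | hnm
    · exact ih (n + (m + 1)) (by omega) huv (one_mem_powSpan_of_succ hI huv (by omega) hu hv) hv rfl
    · exact ih ((n + 1) + m) (by omega) huv hu
        (one_mem_powSpan_of_succ hI (by rwa [mul_comm]) (by omega) hv hu) rfl

end AddSubgroup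

namespace GradedField

variable {H : Type*} [CommGroup H] [DecidableEq H] {K : Type*} [CommRing K] (F : GradedField H K)

lemma coe_decompose (x : K) :
    DirectSum.coeAddMonoidHom (fun h : H => F.comp h) (F.decompose x) = x :=
  (Equiv.ofBijective _ F.isInternal).apply_symm_apply x

lemma decompose_of_mem {g : H} {x : K} (hx : x ∈ F.comp g) :
    F.decompose x = DirectSum.of (fun h : H => F.comp h) g ⟨x, hx⟩ :=
  F.isInternal.injective (by rw [coe_decompose, DirectSum.coeAddMonoidHom_of])

noncomputable def componentHom (g : H) : K →+ K :=
  (F.comp g).subtype.comp <| (DFinsupp.evalAddMonoidHom g).comp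
    (AddEquiv.ofBijective (DirectSum.coeAddMonoidHom fun h : H => F.comp h)
      F.isInternal).symm.toAddMonoidHom

@[simp] lemma componentHom_apply (g : H) (x : K) : F.componentHom g x = F.component g x := rfl

lemma component_mem (g : H) (x : K) : F.component g x ∈ F.comp g := (F.decompose x g).2

lemma component_of_mem {g : H} {x : K} (hx : x ∈ F.comp g) : F.component g x = x := by
  rw [component, decompose_of_mem F hx, DirectSum.of_eq_same]

lemma component_of_mem_of_ne {g d : H} {x : K} (hx : x ∈ F.comp d) (h : g ≠ d) :
    F.component g x = 0 := by
  rw [component, decompose_of_mem F hx, DirectSum.of_eq_of_ne _ _ _ h, ZeroMemClass.coe_zero]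

lemma mem_of_forall_component_mem {S : AddSubgroup K} {x : K} (hx : ∀ g, F.component g x ∈ S) :
    x ∈ S := by
  classical
  rw [← F.coe_decompose x, DirectSum.coeAddMonoidHom_eq_dfinsuppSum]
  exact dfinsuppSum_mem _ _ _ fun g _ => hx g

lemma addMonoidHom_ext {M : Type*} [AddCommGroup M] {f f' : K →+ M}
    (h : ∀ g, ∀ x ∈ F.comp g, f x = f' x) : f = f' := by
  ext x
  exact F.mem_of_forall_component_mem (S := f.eqLocus f') fun g => h g _ (F.component_mem g x)

lemma component_mem_of_isGradedSubring {B : Subring K} (hB : F.IsGradedSubring B) {x : K}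
    (hx : x ∈ B) (g : H) : F.component g x ∈ B := by
  refine (AddSubgroup.closure_le (B.toAddSubgroup.comap (F.componentHom g))).mpr ?_ (hB x hx)
  rintro y ⟨hyB, d, hd⟩
  by_cases hgd : g = d
  · rwa [hgd, SetLike.mem_coe, AddSubgroup.mem_comap, componentHom_apply, F.component_of_mem hd]
  · rw [SetLike.mem_coe, AddSubgroup.mem_comap, componentHom_apply, F.component_of_mem_of_ne hd hgd]
    exact B.zero_mem

lemma component_map {σ : RingAut K} (hσ : F.IsGradedAut σ) (g : H) (x : K) :
    σ (F.component g x) = F.component g (σ x) := by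
  suffices (σ.toAddMonoidHom).comp (F.componentHom g) = (F.componentHom g).comp σ.toAddMonoidHom
    from DFunLike.congr_fun this x
  refine F.addMonoidHom_ext fun d y hy => ?_
  by_cases hgd : g = d
  · subst hgd
    simp [F.component_of_mem hy, F.component_of_mem (hσ g y hy)]
  · simp [F.component_of_mem_of_ne hy hgd, F.component_of_mem_of_ne (hσ d y hy) hgd]

def homogeneousSubmonoid : Submonoid K where
  carrier := {x | F.Homogeneous x}
  one_mem' := ⟨1, F.one_mem⟩
  mul_mem' := fun ⟨g, hx⟩ ⟨h, hy⟩ => ⟨g * h, F.mul_mem hx hy⟩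

lemma isGradedSubring_closure {s : Set K} (hs : ∀ x ∈ s, F.Homogeneous x) :
    F.IsGradedSubring (Subring.closure s) := by
  intro x hx
  refine AddSubgroup.closure_mono ?_ (Subring.mem_closure_iff.mp hx)
  exact (Submonoid.closure_le (S := (Subring.closure s).toSubmonoid ⊓ F.homogeneousSubmonoid)).mpr
    fun y hy => ⟨Subring.subset_closure hy, hs y hy⟩

variable {F} in
lemma IsGradedSubring.le_closure {B : Subring K} (hB : F.IsGradedSubring B) {s : Set K}
    (hs : {x | x ∈ B ∧ F.Homogeneous x} ⊆ s) : B ≤ Subring.closure s := fun x hx =>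
  (AddSubgroup.closure_le (Subring.closure s).toAddSubgroup).mpr
    (fun _ hy => Subring.subset_closure (hs hy)) (hB x hx)

lemma isGradedSubfield_top : F.IsGradedSubfield ⊤ where
  graded x _ := F.mem_of_forall_component_mem fun g =>
    AddSubgroup.subset_closure ⟨Subring.mem_top _, g, F.component_mem g x⟩
  inv_mem _ _ _ _ := Subring.mem_top _

lemma isGradedSubfield_fixedSubring {G : Subgroup (RingAut K)} (hG : ∀ σ ∈ G, F.IsGradedAut σ) :
    F.IsGradedSubfield (fixedSubring G) where
  graded x hx := F.mem_of_forall_component_mem fun g =>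
    AddSubgroup.subset_closure ⟨fun σ hσ => by rw [F.component_map (hG σ hσ), hx σ hσ],
      g, F.component_mem g x⟩
  inv_mem x hx hxh hx0 σ hσ := by
    obtain ⟨g, hg⟩ := hxh
    obtain ⟨y, -, hxy⟩ := F.inv_mem hg hx0
    have hσy : x * σ y = 1 := by rw [← hx σ hσ, ← map_mul, hxy, map_one]
    rw [Ring.inverse_eq_of_mul_eq_one hxy]
    exact (Ring.inverse_eq_of_mul_eq_one hσy).symm.trans (Ring.inverse_eq_of_mul_eq_one hxy)

lemma add_mem_nonunits {L S : Subring K} (hL : F.IsGradedSubfield L) (hS : F.IsGradedValRing L S)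
    {g : H} {x y : K} (hx : x ∈ F.comp g) (hy : y ∈ F.comp g) (hxS : x ∈ S.nonunits)
    (hyS : y ∈ S.nonunits) : x + y ∈ S.nonunits := by
  rcases eq_or_ne x 0 with rfl | hx0
  · rwa [zero_add]
  rcases eq_or_ne y 0 with rfl | hy0
  · rwa [add_zero]
  -- `x y⁻¹ ∈ L` or its inverse lies in `S`, making `x + y` an `S`-multiple of `y` or of `x`.
  obtain ⟨x', -, hxx'⟩ := F.inv_mem hx hx0
  obtain ⟨y', hy', hyy'⟩ := F.inv_mem hy hy0
  have ht : x * y' * (y * x') = 1 := by linear_combination y * y' * hxx' + hyy'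
  have htL : x * y' ∈ L := L.mul_mem (hS.1 hxS.1)
    (Ring.inverse_eq_of_mul_eq_one hyy' ▸ hL.inv_mem y (hS.1 hyS.1) ⟨g, hy⟩ hy0)
  have ht0 : x * y' ≠ 0 := fun h => F.zero_ne_one (by rw [← ht, h, zero_mul])
  rcases hS.2.2 _ htL ⟨g * g⁻¹, F.mul_mem hx hy'⟩ ht0 with h | h
  · exact Subring.add_mem_nonunits_of_mul_mem hxS hyS hyy' h
  · rw [Ring.inverse_eq_of_mul_eq_one ht] at h
    rw [add_comm]
    exact Subring.add_mem_nonunits_of_mul_mem hyS hxS hxx' h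

def nonunitsOfDegree {L S : Subring K} (hL : F.IsGradedSubfield L) (hS : F.IsGradedValRing L S)
    (g : H) : AddSubgroup K where
  carrier := F.comp g ∩ S.nonunits
  add_mem' hx hy := ⟨add_mem hx.1 hy.1, F.add_mem_nonunits hL hS hx.1 hy.1 hx.2 hy.2⟩
  zero_mem' := ⟨zero_mem _, Subring.zero_mem_nonunits F.zero_ne_one⟩
  neg_mem' hx := ⟨neg_mem hx.1, by simpa using Subring.mul_mem_nonunits (S.neg_mem S.one_mem) hx.2⟩

def homogNonunits (R A' : Subring K) : Set K :=
  {x | F.Homogeneous x ∧ (x ∈ R.nonunits ∨ x ∈ A'.nonunits)}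

variable {F} {L R A' B : Subring K}

lemma homogNonunits_subset (hRA' : R ≤ A') : F.homogNonunits R A' ⊆ A' := by
  rintro x ⟨-, hx | hx⟩
  exacts [hRA' hx.1, hx.1]

lemma mem_nonunits_of_mem_nonunits (hR : F.IsGradedValRing L R) (hRA' : R ≤ A') {x : K}
    (hxL : x ∈ L) (hx : F.Homogeneous x) (hxA' : x ∈ A'.nonunits) : x ∈ R.nonunits := by
  refine Subring.mem_nonunits_of_le hRA' hxA' ?_
  rcases eq_or_ne x 0 with rfl | hx0
  · exact R.zero_mem
  obtain ⟨g, hg⟩ := hx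
  obtain ⟨y, -, hxy⟩ := F.inv_mem hg hx0
  refine (hR.2.2 x hxL ⟨g, hg⟩ hx0).resolve_right fun h => hxA'.2 y (hRA' ?_) hxy
  rwa [← Ring.inverse_eq_of_mul_eq_one hxy]

lemma one_notMem_closure_homogNonunits (hL : F.IsGradedSubfield L) (hR : F.IsGradedValRing L R)
    (hA' : F.IsGradedValRing ⊤ A') (hRA' : R ≤ A') :
    (1 : K) ∉ AddSubgroup.closure (F.homogNonunits R A') := by
  -- The degree-one component of `1` would be `r + a` with `r ∈ R.nonunits`, `a ∈ A'.nonunits`;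
  -- as `a = 1 - r ∈ L`, also `a ∈ R.nonunits`.
  intro h1
  let NR := F.nonunitsOfDegree hL hR 1
  let NA' := F.nonunitsOfDegree F.isGradedSubfield_top hA' 1
  have hle : (AddSubgroup.closure (F.homogNonunits R A')).map (F.componentHom 1) ≤ NR ⊔ NA' := by
    rw [AddMonoidHom.map_closure, AddSubgroup.closure_le]
    rintro _ ⟨x, ⟨⟨g, hg⟩, hx⟩, rfl⟩
    rw [componentHom_apply]
    by_cases h : 1 = g
    · subst h
      rw [F.component_of_mem hg]
      rcases hx with hx | hx
      exacts [AddSubgroup.mem_sup_left (⟨hg, hx⟩ : x ∈ NR),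
        AddSubgroup.mem_sup_right (⟨hg, hx⟩ : x ∈ NA')]
    · rw [F.component_of_mem_of_ne hg h]
      exact zero_mem _
  obtain ⟨r, hr, a, ha, hra⟩ := AddSubgroup.mem_sup.mp
    (hle ⟨1, h1, by rw [componentHom_apply, F.component_of_mem F.one_mem]⟩)
  have haL : a ∈ L := by
    rw [eq_sub_of_add_eq' hra]
    exact L.sub_mem L.one_mem (hR.1 hr.2.1)
  have ha' : a ∈ NR := ⟨ha.1, mem_nonunits_of_mem_nonunits hR hRA' haL ⟨1, ha.1⟩ ha.2⟩
  exact Subring.one_notMem_nonunits (hra ▸ NR.add_mem hr ha').2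

variable (F) in
structure IsAdmissible (R A' B : Subring K) : Prop where
  isGradedSubring : F.IsGradedSubring B
  le_left : R ≤ B
  le_right : B ≤ A'
  homogNonunits_subset : F.homogNonunits R A' ⊆ B
  one_notMem : (1 : K) ∉ B.idealSpan (F.homogNonunits R A')

lemma idealSpan_closure_le (hRA' : R ≤ A') :
    (Subring.closure ({x | x ∈ R ∧ F.Homogeneous x} ∪ F.homogNonunits R A')).idealSpan
      (F.homogNonunits R A') ≤ AddSubgroup.closure (F.homogNonunits R A') := by
  -- Monomials in the generators are homogeneous elements of `R` or nonunits of `A'`.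
  have hmon : ∀ q ∈ Submonoid.closure ({x | x ∈ R ∧ F.Homogeneous x} ∪ F.homogNonunits R A'),
      F.Homogeneous q ∧ (q ∈ R ∨ q ∈ A'.nonunits) := by
    intro q hq
    induction hq using Submonoid.closure_induction with
    | mem q hq =>
      rcases hq with ⟨hqR, hq⟩ | ⟨hq, hqR | hqA'⟩
      exacts [⟨hq, .inl hqR⟩, ⟨hq, .inl hqR.1⟩, ⟨hq, .inr hqA'⟩]
    | one => exact ⟨F.homogeneousSubmonoid.one_mem, .inl R.one_mem⟩
    | mul p q _ _ hp hq =>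
      refine ⟨F.homogeneousSubmonoid.mul_mem hp.1 hq.1, ?_⟩
      rcases hp.2, hq.2 with ⟨hp | hp, hq | hq⟩
      · exact .inl (R.mul_mem hp hq)
      · exact .inr (Subring.mul_mem_nonunits (hRA' hp) hq)
      · exact .inr (by rw [mul_comm]; exact Subring.mul_mem_nonunits (hRA' hq) hp)
      · exact .inr (Subring.mul_mem_nonunits hp.1 hq)
  refine (AddSubgroup.closure_le _).mpr ?_
  rintro _ ⟨b, hb, m, hm, rfl⟩
  replace hb := Subring.mem_closure_iff.mp hb
  dsimp only
  induction hb using AddSubgroup.closure_induction with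
  | mem q hq =>
    refine AddSubgroup.subset_closure ⟨F.homogeneousSubmonoid.mul_mem (hmon q hq).1 hm.1, ?_⟩
    rcases (hmon q hq).2, hm.2 with ⟨hq | hq, hm' | hm'⟩
    · exact .inl (Subring.mul_mem_nonunits hq hm')
    · exact .inr (Subring.mul_mem_nonunits (hRA' hq) hm')
    · exact .inr (by rw [mul_comm]; exact Subring.mul_mem_nonunits (hRA' hm'.1) hq)
    · exact .inr (by rw [mul_comm]; exact Subring.mul_mem_nonunits hm'.1 hq)
  | zero => rw [zero_mul]; exact zero_mem _
  | add x y _ _ hx hy => rw [add_mul]; exact add_mem hx hy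
  | neg x _ hx => rw [neg_mul]; exact neg_mem hx

lemma isAdmissible_closure (hL : F.IsGradedSubfield L) (hR : F.IsGradedValRing L R)
    (hA' : F.IsGradedValRing ⊤ A') (hRA' : R ≤ A') :
    F.IsAdmissible R A'
      (Subring.closure ({x | x ∈ R ∧ F.Homogeneous x} ∪ F.homogNonunits R A')) where
  isGradedSubring := F.isGradedSubring_closure <| by
    rintro x (⟨-, hx⟩ | ⟨hx, -⟩) <;> exact hx
  le_left := hR.2.1.le_closure Set.subset_union_left
  le_right := Subring.closure_le.mpr <| Set.union_subset (fun x hx => hRA' hx.1)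
    (homogNonunits_subset hRA')
  homogNonunits_subset := Subring.subset_closure.trans' Set.subset_union_right
  one_notMem h := one_notMem_closure_homogNonunits hL hR hA' hRA' (idealSpan_closure_le hRA' h)

lemma isAdmissible_sSup {c : Set (Subring K)} (hc : ∀ B ∈ c, F.IsAdmissible R A' B)
    (hne : c.Nonempty) (hdir : DirectedOn (· ≤ ·) c) : F.IsAdmissible R A' (sSup c) where
  isGradedSubring x hx := by
    obtain ⟨B, hBc, hxB⟩ := (Subring.mem_sSup_of_directedOn hne hdir).mp hx
    exact AddSubgroup.closure_mono (fun y (hy : y ∈ B ∧ F.Homogeneous y) =>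
      (⟨le_sSup hBc hy.1, hy.2⟩ : y ∈ sSup c ∧ F.Homogeneous y))
      ((hc B hBc).isGradedSubring x hxB)
  le_left := (hc _ hne.some_mem).le_left.trans (le_sSup hne.some_mem)
  le_right := sSup_le fun B hB => (hc B hB).le_right
  homogNonunits_subset := (hc _ hne.some_mem).homogNonunits_subset.trans (le_sSup hne.some_mem)
  one_notMem h := by
    obtain ⟨B, hBc, hB⟩ := Subring.exists_mem_idealSpan_of_mem_sSup hne hdir h
    exact (hc B hBc).one_notMem hB

lemma exists_one_mem_powSpan_of_maximal (hB : Maximal (F.IsAdmissible R A') B) {w : K}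
    (hwA' : w ∈ A') (hw : F.Homogeneous w) (hwB : w ∉ B) :
    ∃ n, 1 ∈ (B.idealSpan (F.homogNonunits R A')).powSpan w n := by
  let Bw := Subring.closure (insert w {x | x ∈ B ∧ F.Homogeneous x})
  have hBBw : B ≤ Bw := hB.1.isGradedSubring.le_closure (Set.subset_insert _ _)
  have h1 : 1 ∈ Bw.idealSpan (F.homogNonunits R A') := by
    by_contra h1
    have hBw : F.IsAdmissible R A' Bw :=
      { isGradedSubring := F.isGradedSubring_closure <| by
          rintro x (rfl | ⟨-, hx⟩)
          exacts [hw, hx]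
        le_left := hB.1.le_left.trans hBBw
        le_right := Subring.closure_le.mpr <| Set.insert_subset hwA' fun x hx =>
          hB.1.le_right hx.1
        homogNonunits_subset := hB.1.homogNonunits_subset.trans hBBw
        one_notMem := h1 }
    exact hwB (hB.2 hBw hBBw (Subring.subset_closure (Set.mem_insert w _)))
  obtain ⟨p, hp, hp1⟩ :=
    Subring.exists_polynomial_of_mem_idealSpan_closure_insert (fun _ hx => hx.1) h1
  exact ⟨p.natDegree, hp1 ▸ AddSubgroup.eval_mem_powSpan hp⟩

lemma IsAdmissible.mem_of_mul_eq_one (hB : F.IsAdmissible R A' B) (hA' : F.IsGradedValRing ⊤ A')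
    {x y : K} (hxy : x * y = 1) (hx : F.Homogeneous x) (hy : F.Homogeneous y) (hyB : y ∉ B) :
    x ∈ A' := by
  have hx0 : x ≠ 0 := by rintro rfl; exact F.zero_ne_one (by rw [← hxy, zero_mul])
  by_contra hxA'
  have hyA' : y ∈ A' := by
    simpa [Ring.inverse_eq_of_mul_eq_one hxy, hxA'] using hA'.2.2 x (Subring.mem_top x) hx hx0
  exact hyB (hB.homogNonunits_subset
    ⟨hy, .inr (Subring.mem_nonunits_of_mul_eq_one hxy hxA' hyA')⟩)

lemma isGradedValRing_of_maximal (hB : Maximal (F.IsAdmissible R A') B)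
    (hA' : F.IsGradedValRing ⊤ A') : F.IsGradedValRing ⊤ B := by
  refine ⟨le_top, hB.1.isGradedSubring, fun x _ ⟨g, hx⟩ hx0 => ?_⟩
  obtain ⟨y, hy, hxy⟩ := F.inv_mem hx hx0
  have hyx : y * x = 1 := by rw [mul_comm, hxy]
  rw [Ring.inverse_eq_of_mul_eq_one hxy]
  by_contra! h
  obtain ⟨n, hn⟩ := exists_one_mem_powSpan_of_maximal hB
    (hB.1.mem_of_mul_eq_one hA' hxy ⟨g, hx⟩ ⟨_, hy⟩ h.2) ⟨g, hx⟩ h.1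
  obtain ⟨m, hm⟩ := exists_one_mem_powSpan_of_maximal hB
    (hB.1.mem_of_mul_eq_one hA' hyx ⟨_, hy⟩ ⟨g, hx⟩ h.1) ⟨_, hy⟩ h.2
  exact hB.1.one_notMem <| AddSubgroup.one_mem_of_one_mem_powSpan
    (fun a ha b hb => Subring.mul_mem_idealSpan_of_subset hB.1.homogNonunits_subset ha hb) hxy hn hm

lemma IsAdmissible.inf_eq (hB : F.IsAdmissible R A' B) (hL : F.IsGradedSubfield L)
    (hR : F.IsGradedValRing L R) : B ⊓ L = R := by
  refine le_antisymm (fun z hz => ?_) (le_inf hB.le_left hR.1)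
  obtain ⟨hzB, hzL⟩ := Subring.mem_inf.mp hz
  refine F.mem_of_forall_component_mem (S := R.toAddSubgroup) fun g => ?_
  by_contra hzg
  have hz0 : F.component g z ≠ 0 := fun h => hzg (h ▸ R.zero_mem)
  obtain ⟨y, hy, hzy⟩ := F.inv_mem (F.component_mem g z) hz0
  have hyR : y ∈ R := by
    have := hR.2.2 _ (F.component_mem_of_isGradedSubring hL.graded hzL g)
      ⟨g, F.component_mem g z⟩ hz0
    rw [Ring.inverse_eq_of_mul_eq_one hzy] at this
    exact this.resolve_left hzg
  exact hB.one_notMem (hzy ▸ Subring.mul_mem_idealSpan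
    (F.component_mem_of_isGradedSubring hB.isGradedSubring hzB g)
    ⟨⟨_, hy⟩, .inl (Subring.mem_nonunits_of_mul_eq_one hzy hzg hyR)⟩)

theorem exists_extension_le_of_le (hL : F.IsGradedSubfield L) (hR : F.IsGradedValRing L R)
    (hA' : F.IsGradedValRing ⊤ A') (hRA' : R ≤ A') :
    ∃ A : Subring K, (F.IsGradedValRing ⊤ A ∧ A ⊓ L = R) ∧ A ≤ A' := by
  obtain ⟨B, -, hB⟩ := zorn_le_nonempty₀ {B | F.IsAdmissible R A' B}
    (fun c hc hchain B hBc => ⟨sSup c, isAdmissible_sSup hc ⟨B, hBc⟩ hchain.directedOn,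
      fun _ => le_sSup⟩) _ (isAdmissible_closure hL hR hA' hRA')
  exact ⟨B, ⟨isGradedValRing_of_maximal hB hA', hB.1.inf_eq hL hR⟩, hB.1.le_right⟩

end GradedField

theorem GradedField.exists_extension_le_general {H : Type*} [CommGroup H] [DecidableEq H]
    {K : Type*} [CommRing K] (F : GradedField H K) (G : Subgroup (RingAut K))
    (hG : ∀ σ ∈ G, F.IsGradedAut σ) (R R' : Subring K)
    (hR : F.IsGradedValRing (fixedSubring G) R)
    (hRR' : R ≤ R') (A' : Subring K) (hA' : F.IsGradedValRing ⊤ A')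
    (hA'ext : A' ⊓ fixedSubring G = R') :
    ∃ A : Subring K, (F.IsGradedValRing ⊤ A ∧ A ⊓ fixedSubring G = R) ∧ A ≤ A' :=
  exists_extension_le_of_le (F.isGradedSubfield_fixedSubring hG) hR hA'
    (hRR'.trans (hA'ext ▸ inf_le_left))

/-- Let `K` be an `H`-graded field, `G` a finite group of graded automorphisms, `L = K^G`,
`R ⊆ R'` graded valuation rings of `L`, and `A'` a graded valuation ring of `K` extending
`R'`.  Then there is a graded valuation ring `A` of `K` extending `R` with `A ⊆ A'`. -/
theorem GradedField.exists_extension_le {H : Type*} [CommGroup H] [DecidableEq H]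
    {K : Type*} [CommRing K] (F : GradedField H K) (G : Subgroup (RingAut K)) [Finite G]
    (hG : ∀ σ ∈ G, F.IsGradedAut σ) (R R' : Subring K)
    (hR : F.IsGradedValRing (fixedSubring G) R) (hR' : F.IsGradedValRing (fixedSubring G) R')
    (hRR' : R ≤ R') (A' : Subring K) (hA' : F.IsGradedValRing ⊤ A')
    (hA'ext : A' ⊓ fixedSubring G = R') :
    ∃ A : Subring K, (F.IsGradedValRing ⊤ A ∧ A ⊓ fixedSubring G = R) ∧ A ≤ A' :=
  GradedField.exists_extension_le_general F G hG R R' hR hRR' A' hA' hA'ext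
end ZR
end

section
/- The image of the natural injection i: P_{K/k} → {0,1}^{K^×}, O ↦ (characteristic function of O ∩ K^×), is closed in the product topology, where {0,1} carries the discrete topology. Consequently P_{K/k} with the constructible topology is compact Hausdorff. -/
open scoped DirectSum

section ZR

variable {H : Type*} [CommGroup H] [DecidableEq H] {K : Type*} [CommRing K]

/-! A graded valuation ring `O` is the additive span of its homogeneous elements, so it is
determined by `χ_O`. Conversely, `f : K^× → {0,1}` is of the form `χ_O` exactly when `f` is
`1` on `k₀`, the set `S = {0} ∪ f⁻¹(1)` is closed under products, negatives and sums of equal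
degree, and `f x = 1` or `f x⁻¹ = 1` for all `x`. These conditions are closed in the product
topology. For the converse, take `O` to be the additive span of `S`: it is a ring since `S` is
multiplicative, and its homogeneous elements are those of `S` because each homogeneous component
of an element of the span lies in `S`. Compactness and the Hausdorff property are then inherited
from `{0,1}^{K^×}` along the closed embedding `χ`. -/

open DirectSum

theorem DirectSum.decompose_mem_of_mem_addSubgroupClosure {ι M σ : Type*} [DecidableEq ι]
    [AddCommGroup M] [SetLike σ M] [AddSubgroupClass σ M] (ℳ : ι → σ) [Decomposition ℳ]
    {S : Set M} (zero_mem : (0 : M) ∈ S) (neg_mem : ∀ x ∈ S, -x ∈ S)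
    (add_mem : ∀ i, ∀ x ∈ S, ∀ y ∈ S, x ∈ ℳ i → y ∈ ℳ i → x + y ∈ S)
    (homogeneous : ∀ x ∈ S, ∃ i, x ∈ ℳ i) {z : M} (hz : z ∈ AddSubgroup.closure S)
    (i : ι) : (decompose ℳ z i : M) ∈ S := by
  induction hz using AddSubgroup.closure_induction generalizing i with
  | mem x hx =>
    obtain ⟨j, hxj⟩ := homogeneous x hx
    by_cases hji : j = i
    · rwa [← hji, decompose_of_mem_same ℳ hxj]
    · rwa [decompose_of_mem_ne ℳ hxj hji]
  | zero => simpa using zero_mem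
  | add x y _ _ hx hy =>
    simpa using add_mem i _ (hx i) _ (hy i) (decompose ℳ x i).2 (decompose ℳ y i).2
  | neg x _ hx =>
    rw [decompose_neg, DFinsupp.neg_apply, NegMemClass.coe_neg]
    exact neg_mem _ (hx i)

namespace GradedField

variable {H : Type*} [CommGroup H] [DecidableEq H] {K : Type*} [CommRing K] (F : GradedField H K)

noncomputable instance : Decomposition F.comp := F.isInternal.chooseDecomposition

theorem homogeneous_mul {x y : K} : F.Homogeneous x → F.Homogeneous y → F.Homogeneous (x * y)
  | ⟨_, hx⟩, ⟨_, hy⟩ => ⟨_, F.mul_mem hx hy⟩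

theorem homogeneous_neg {x : K} : F.Homogeneous x → F.Homogeneous (-x)
  | ⟨_, hx⟩ => ⟨_, neg_mem hx⟩

theorem isUnit_of_homogeneous {x : K} (hx : F.Homogeneous x) (hx0 : x ≠ 0) : IsUnit x :=
  let ⟨_, hxh⟩ := hx
  let ⟨y, _, hxy⟩ := F.inv_mem hxh hx0
  IsUnit.of_mul_eq_one y hxy

theorem exists_mul_eq_one (x : F.HomogUnits) : ∃ y : F.HomogUnits, x.1 * y.1 = 1 := by
  obtain ⟨hx0, h, hxh⟩ := x.2
  obtain ⟨y, hyh, hxy⟩ := F.inv_mem hxh hx0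
  exact ⟨⟨y, fun hy0 => F.zero_ne_one (by simpa [hy0] using hxy), h⁻¹, hyh⟩, hxy⟩

theorem mul_ne_zero (x y : F.HomogUnits) : x.1 * y.1 ≠ 0 := fun h =>
  F.zero_ne_one <| isUnit_zero_iff.mp <| h ▸
    (F.isUnit_of_homogeneous x.2.2 x.2.1).mul (F.isUnit_of_homogeneous y.2.2 y.2.1)

variable {F} in
theorem IsGradedSubring.le {R R' : Subring K} (hR : F.IsGradedSubring R)
    (h : ∀ x : F.HomogUnits, x.1 ∈ R → x.1 ∈ R') : R ≤ R' := by
  intro x hx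
  refine (AddSubgroup.closure_le R'.toAddSubgroup).mpr ?_ (hR x hx)
  rintro y ⟨hyR, hy⟩
  by_cases hy0 : y = 0
  · exact hy0 ▸ R'.zero_mem
  · exact h ⟨y, hy0, hy⟩ hyR

variable (k₀ : Subring K)

@[simp]
theorem chi_eq_true (O : F.ZR k₀) (x : F.HomogUnits) : F.chi k₀ O x = true ↔ x.1 ∈ O.1 := by
  simp [chi]

theorem chi_injective : Function.Injective (F.chi k₀) := by
  intro O O' h
  have hle {O O' : F.ZR k₀} (h : F.chi k₀ O = F.chi k₀ O') : O.1 ≤ O'.1 :=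
    O.2.1.2.1.le fun x hx => by
      rwa [← chi_eq_true, ← h, chi_eq_true]
  exact Subtype.ext (le_antisymm (hle h) (hle h.symm))

/-- Each condition involves at most three values of `f`, so that it is closed in the product
topology. -/
def IsValRingIndicator (f : F.HomogUnits → Bool) : Prop :=
  (∀ x : F.HomogUnits, x.1 ∈ k₀ → f x) ∧
  (∀ x y z : F.HomogUnits, z.1 = x.1 * y.1 → f x → f y → f z) ∧
  (∀ x z : F.HomogUnits, z.1 = -x.1 → f x → f z) ∧
  (∀ (x y z : F.HomogUnits) (h : H), x.1 ∈ F.comp h → y.1 ∈ F.comp h → z.1 = x.1 + y.1 →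
    f x → f y → f z) ∧
  (∀ x y : F.HomogUnits, x.1 * y.1 = 1 → f x ∨ f y)

theorem isClosed_setOf_isValRingIndicator : IsClosed {f | F.IsValRingIndicator k₀ f} := by
  have hclopen (x : F.HomogUnits) : IsClopen {f : F.HomogUnits → Bool | f x} :=
    (isClopen_discrete {true}).preimage (continuous_apply x)
  have himp {x y : F.HomogUnits} {s : Set (F.HomogUnits → Bool)} (hs : IsClosed s) :
      IsClosed {f | f x → f y → f ∈ s} :=
    isClosed_imp (hclopen x).isOpen (isClosed_imp (hclopen y).isOpen hs)
  simp only [IsValRingIndicator, Set.ofPred_and, Set.ofPred_forall]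
  refine .inter ?_ (.inter ?_ (.inter ?_ (.inter ?_ ?_)))
  · exact isClosed_iInter fun x => isClosed_iInter fun _ => (hclopen x).isClosed
  · exact isClosed_iInter fun x => isClosed_iInter fun y => isClosed_iInter fun z =>
      isClosed_iInter fun _ => himp (hclopen z).isClosed
  · exact isClosed_iInter fun x => isClosed_iInter fun z =>
      isClosed_iInter fun _ => isClosed_imp (hclopen x).isOpen (hclopen z).isClosed
  · exact isClosed_iInter fun x => isClosed_iInter fun y => isClosed_iInter fun z =>
      isClosed_iInter fun _ => isClosed_iInter fun _ => isClosed_iInter fun _ =>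
      isClosed_iInter fun _ => himp (hclopen z).isClosed
  · exact isClosed_iInter fun x => isClosed_iInter fun y =>
      isClosed_iInter fun _ => (hclopen x).isClosed.union (hclopen y).isClosed

theorem isValRingIndicator_chi (O : F.ZR k₀) : F.IsValRingIndicator k₀ (F.chi k₀ O) := by
  simp only [IsValRingIndicator, chi_eq_true]
  refine ⟨fun x hx => O.2.2 hx, ?_, ?_, ?_, ?_⟩
  · intro x y z hz hx hy
    exact hz ▸ O.1.mul_mem hx hy
  · intro x z hz hx
    exact hz ▸ O.1.neg_mem hx
  · intro x y z _ _ _ hz hx hy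
    exact hz ▸ O.1.add_mem hx hy
  · intro x y hxy
    have hinv : Ring.inverse x.1 = y.1 := by
      simpa [hxy] using Ring.inverse_mul_cancel_left x.1 y.1 (.of_mul_eq_one _ hxy)
    simpa [hinv] using O.2.1.2.2 x.1 trivial x.2.2 x.2.1

namespace IsValRingIndicator

variable {F k₀} {f : F.HomogUnits → Bool}

def submonoid (hf : F.IsValRingIndicator k₀ f) : Submonoid K where
  carrier := insert 0 (Subtype.val '' {x | f x})
  one_mem' := .inr ⟨⟨1, F.zero_ne_one.symm, 1, F.one_mem⟩, hf.1 _ k₀.one_mem, rfl⟩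
  mul_mem' := by
    rintro _ _ (rfl | ⟨x, hx, rfl⟩) (rfl | ⟨y, hy, rfl⟩)
    · exact .inl (zero_mul _)
    · exact .inl (zero_mul _)
    · exact .inl (mul_zero _)
    · exact .inr ⟨⟨x.1 * y.1, F.mul_ne_zero x y, F.homogeneous_mul x.2.2 y.2.2⟩,
        hf.2.1 x y _ rfl hx hy, rfl⟩

theorem val_mem_submonoid_iff (hf : F.IsValRingIndicator k₀ f) (x : F.HomogUnits) :
    x.1 ∈ hf.submonoid ↔ f x := by
  refine ⟨?_, fun hx => .inr ⟨x, hx, rfl⟩⟩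
  rintro (h0 | ⟨y, hy, hyx⟩)
  · exact absurd h0 x.2.1
  · rwa [← Subtype.ext hyx]

def valRing (hf : F.IsValRingIndicator k₀ f) : Subring K := Subring.closure hf.submonoid

theorem mem_valRing_iff (hf : F.IsValRingIndicator k₀ f) {x : K} :
    x ∈ hf.valRing ↔ x ∈ AddSubgroup.closure (hf.submonoid : Set K) := by
  rw [valRing, Subring.mem_closure_iff, Submonoid.closure_eq]

theorem decompose_mem_submonoid (hf : F.IsValRingIndicator k₀ f) {z : K}
    (hz : z ∈ hf.valRing) (h : H) : (DirectSum.decompose F.comp z h : K) ∈ hf.submonoid := by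
  have ⟨_, _, hneg, hadd, _⟩ := hf
  refine decompose_mem_of_mem_addSubgroupClosure F.comp (Set.mem_insert 0 _) ?_ ?_ ?_
    (hf.mem_valRing_iff.mp hz) h
  · rintro _ (rfl | ⟨x, hx, rfl⟩)
    · exact .inl neg_zero
    · exact .inr ⟨⟨-x.1, neg_ne_zero.mpr x.2.1, F.homogeneous_neg x.2.2⟩,
        hneg x _ rfl hx, rfl⟩
  · rintro g _ (rfl | ⟨x, hx, rfl⟩) _ (rfl | ⟨y, hy, rfl⟩) hxg hyg
    · exact .inl (add_zero 0)
    · exact (zero_add y.1).symm ▸ .inr ⟨y, hy, rfl⟩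
    · exact (add_zero x.1).symm ▸ .inr ⟨x, hx, rfl⟩
    by_cases hxy : x.1 + y.1 = 0
    · exact .inl hxy
    · exact .inr ⟨⟨x.1 + y.1, hxy, g, add_mem hxg hyg⟩, hadd x y _ g hxg hyg rfl hx hy,
        rfl⟩
  · rintro _ (rfl | ⟨x, -, rfl⟩)
    · exact ⟨1, zero_mem _⟩
    · exact x.2.2

theorem val_mem_valRing_iff (hf : F.IsValRingIndicator k₀ f) (x : F.HomogUnits) :
    x.1 ∈ hf.valRing ↔ f x := by
  refine ⟨fun hx => ?_, fun hx => Subring.subset_closure (.inr ⟨x, hx, rfl⟩)⟩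
  obtain ⟨_, h, hxh⟩ := x.2
  rw [← hf.val_mem_submonoid_iff, ← decompose_of_mem_same F.comp hxh]
  exact hf.decompose_mem_submonoid hx h

theorem isGradedValRing_valRing (hf : F.IsValRingIndicator k₀ f) :
    F.IsGradedValRing ⊤ hf.valRing := by
  refine ⟨le_top, fun x hx => ?_, fun x _ hx hx0 => ?_⟩
  · refine AddSubgroup.closure_mono ?_ ((hf.mem_valRing_iff).mp hx)
    rintro _ (rfl | ⟨y, hy, rfl⟩)
    · exact ⟨zero_mem _, 1, zero_mem _⟩
    · exact ⟨(hf.val_mem_valRing_iff y).mpr hy, y.2.2⟩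
  · obtain ⟨y, hxy⟩ := F.exists_mul_eq_one ⟨x, hx0, hx⟩
    have hinv : Ring.inverse x = y.1 := by
      simpa [hxy] using Ring.inverse_mul_cancel_left x y.1 (.of_mul_eq_one _ hxy)
    rw [hinv]
    exact (hf.2.2.2.2 _ y hxy).imp (hf.val_mem_valRing_iff _).mpr (hf.val_mem_valRing_iff y).mpr

theorem le_valRing (hf : F.IsValRingIndicator k₀ f) (hk₀ : F.IsGradedSubring k₀) :
    k₀ ≤ hf.valRing :=
  hk₀.le fun x hx => (hf.val_mem_valRing_iff x).mpr (hf.1 x hx)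

end IsValRingIndicator

theorem range_chi (hk₀ : F.IsGradedSubring k₀) :
    Set.range (F.chi k₀) = {f | F.IsValRingIndicator k₀ f} := by
  refine Set.Subset.antisymm (Set.range_subset_iff.mpr (F.isValRingIndicator_chi k₀)) ?_
  intro f hf
  refine ⟨⟨hf.valRing, hf.isGradedValRing_valRing, hf.le_valRing hk₀⟩, funext fun x => ?_⟩
  exact Bool.eq_iff_iff.mpr ((F.chi_eq_true k₀ _ x).trans (hf.val_mem_valRing_iff x))

end GradedField

/-- The natural injection `i : P_{K/k₀} → {0,1}^{K^×}`, sending a graded valuation ring `O`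
to the characteristic function of `O ∩ K^×`, has closed image in the product topology (with
`{0,1} = Bool` discrete); consequently `P_{K/k₀}` with the induced (constructible) topology
is compact Hausdorff. -/
theorem GradedField.isClosed_range_chi {H : Type*} [CommGroup H] [DecidableEq H]
    {K : Type*} [CommRing K] (F : GradedField H K) (k₀ : Subring K)
    (hk₀ : F.IsGradedSubfield k₀) :
    Function.Injective (F.chi k₀) ∧ IsClosed (Set.range (F.chi k₀)) ∧
      @CompactSpace (F.ZR k₀) (TopologicalSpace.induced (F.chi k₀) inferInstance) ∧
      @T2Space (F.ZR k₀) (TopologicalSpace.induced (F.chi k₀) inferInstance) := by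
  have hinj := F.chi_injective k₀
  have hclosed : IsClosed (Set.range (F.chi k₀)) := by
    rw [F.range_chi k₀ hk₀.graded]
    exact F.isClosed_setOf_isValRingIndicator k₀
  let _ : TopologicalSpace (F.ZR k₀) := .induced (F.chi k₀) inferInstance
  have hemb : Topology.IsClosedEmbedding (F.chi k₀) := ⟨⟨⟨rfl⟩, hinj⟩, hclosed⟩
  exact ⟨hinj, hclosed, hemb.compactSpace, hemb.isEmbedding.t2Space⟩
end ZR
end
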